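/- arXiv:math/0508149 — 2 statements merged into one kernel-verified Lean document; each statement's English description precedes it below -/
import Mathlib

section
/- Let π ∈ S_n and let S, T be totally ordered countable sets, and order S×T lexicographically. Then there is a bijection between the set A(π; S×T) of (S×T)-valued π-partitions and the disjoint union, over all factorizations σ·τ = π in S_n, of A(τ; S) × A(σ; T). -/
/-!
A `π`-partition `f` is exactly a function whose stable sorting permutation `Tuple.sort f`
(ties broken by position) is `π`. Sorting pairs lexicographically is radix sort: sort stably by
the second coordinate `h`, then stably by the first coordinate `g` read in that order, so
`sort (g, h) = sort h * sort (g ∘ sort h)`. Hence `f = (g, h)` corresponds to `σ = sort h`,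
`τ = σ⁻¹ π` and the pair `(g ∘ σ, h)`.
-/

/-- `f` is a `π`-partition: viewing `π` as the labeled total order
`π₁ <_π π₂ <_π ⋯ <_π πₙ`, we require `f(π₁) ≤ f(π₂) ≤ ⋯ ≤ f(πₙ)` with strict
inequality `f(π_k) < f(π_{k+1})` whenever `k` is a descent (`π_k > π_{k+1}`). -/
def IsPPartition {n : ℕ} {S : Type*} [LinearOrder S] (π : Equiv.Perm (Fin n))
    (f : Fin n → S) : Prop :=
  (∀ (k : ℕ) (h : k + 1 < n), f (π ⟨k, by omega⟩) ≤ f (π ⟨k + 1, h⟩)) ∧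
  (∀ (k : ℕ) (h : k + 1 < n),
    π ⟨k + 1, h⟩ < π ⟨k, by omega⟩ → f (π ⟨k, by omega⟩) < f (π ⟨k + 1, h⟩))

open Equiv

theorem Fin.strictMono_iff_lt_add_one {n : ℕ} {γ : Type*} [Preorder γ] {F : Fin n → γ} :
    StrictMono F ↔ ∀ (k : ℕ) (h : k + 1 < n), F ⟨k, by omega⟩ < F ⟨k + 1, h⟩ := by
  cases n with
  | zero => exact ⟨fun _ _ h => by omega, fun _ a => a.elim0⟩
  | succ m =>
    rw [Fin.strictMono_iff_lt_succ]
    exact ⟨fun H k h => H ⟨k, by omega⟩, fun H i => H i (by omega)⟩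

theorem Prod.Lex.toLex_lt_toLex_iff_of_ne {α β : Type*} [LinearOrder α] [LinearOrder β]
    {x y : α} {a b : β} (hab : a ≠ b) :
    toLex (x, a) < toLex (y, b) ↔ x ≤ y ∧ (b < a → x < y) := by
  rw [Prod.Lex.toLex_lt_toLex]
  rcases hab.lt_or_gt with hab | hba <;> grind

namespace Tuple

variable {n : ℕ} {α β : Type*} [LinearOrder α] [LinearOrder β]

theorem eq_sort_iff_strictMono_toLex {f : Fin n → α} {σ : Perm (Fin n)} :
    σ = sort f ↔ StrictMono fun k => toLex (f (σ k), σ k) :=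
  eq_sort_iff'

theorem sort_toLex (g : Fin n → α) (h : Fin n → β) :
    sort (fun i => toLex (g i, h i)) = sort h * sort (g ∘ sort h) := by
  have hσ := eq_sort_iff_strictMono_toLex.1 (rfl : sort h = sort h)
  have hτ := eq_sort_iff_strictMono_toLex.1 (rfl : sort (g ∘ sort h) = _)
  refine (eq_sort_iff_strictMono_toLex.2 fun p q hpq => ?_).symm
  simp only [Perm.mul_apply, Prod.Lex.toLex_lt_toLex]
  rcases Prod.Lex.toLex_lt_toLex.1 (hτ hpq) with hg | ⟨hg, hτpq⟩
  · exact Or.inl (Or.inl hg)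
  rcases Prod.Lex.toLex_lt_toLex.1 (hσ hτpq) with hh | ⟨hh, hσpq⟩
  · exact Or.inl (Or.inr ⟨hg, hh⟩)
  · exact Or.inr ⟨Prod.ext hg hh, hσpq⟩

end Tuple

section

variable {n : ℕ} {α : Type*} [LinearOrder α]

theorem isPPartition_iff_strictMono_toLex (π : Perm (Fin n)) (f : Fin n → α) :
    IsPPartition π f ↔ StrictMono fun k => toLex (f (π k), π k) := by
  rw [Fin.strictMono_iff_lt_add_one, IsPPartition, ← forall₂_and]
  refine forall₂_congr fun k h => (Prod.Lex.toLex_lt_toLex_iff_of_ne ?_).symm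
  simp [Fin.ext_iff]

theorem isPPartition_iff_eq_sort (π : Perm (Fin n)) (f : Fin n → α) :
    IsPPartition π f ↔ π = Tuple.sort f := by
  rw [isPPartition_iff_strictMono_toLex, Tuple.eq_sort_iff_strictMono_toLex]

end

open Tuple in
def lexPPartitionEquiv {n : ℕ} {S T : Type*} [LinearOrder S] [LinearOrder T]
    (π : Perm (Fin n)) :
    {f : Fin n → S ×ₗ T // IsPPartition π f} ≃
      Σ p : {p : Perm (Fin n) × Perm (Fin n) // p.1 * p.2 = π},
        {f : Fin n → S // IsPPartition p.1.2 f} × {f : Fin n → T // IsPPartition p.1.1 f} where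
  toFun f :=
    let g i := (ofLex (f.1 i)).1
    let h i := (ofLex (f.1 i)).2
    have hπ : π = sort h * sort (g ∘ sort h) :=
      ((isPPartition_iff_eq_sort π f.1).1 f.2).trans (sort_toLex g h)
    ⟨⟨(sort h, (sort h)⁻¹ * π), mul_inv_cancel_left _ _⟩,
      ⟨g ∘ sort h, (isPPartition_iff_eq_sort _ _).2
        (show (sort h)⁻¹ * π = _ by rw [hπ, inv_mul_cancel_left])⟩,
      ⟨h, (isPPartition_iff_eq_sort _ _).2 rfl⟩⟩
  invFun := fun ⟨⟨(σ, τ), hστ⟩, ⟨G, hG⟩, ⟨h, hh⟩⟩ =>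
    ⟨fun i => toLex (G (σ⁻¹ i), h i), by
      rw [isPPartition_iff_eq_sort] at hG hh ⊢
      subst hh hG hστ
      have hG_comp : (fun i => G ((sort h)⁻¹ i)) ∘ sort h = G := by ext; simp
      rw [sort_toLex, hG_comp]⟩
  left_inv f := by
    ext i
    simp
  right_inv := by
    rintro ⟨⟨⟨σ, τ⟩, hστ⟩, ⟨G, hG⟩, ⟨h, hh⟩⟩
    obtain rfl : σ = sort h := (isPPartition_iff_eq_sort σ h).1 hh
    obtain rfl : τ = (sort h)⁻¹ * π := by rw [← hστ, inv_mul_cancel_left]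
    refine Sigma.ext rfl (heq_of_eq (Prod.ext (Subtype.ext ?_) rfl))
    ext i
    simp

theorem ppartition_bijection_general (n : ℕ) (π : Equiv.Perm (Fin n))
    (S T : Type) [LinearOrder S] [LinearOrder T] :
    Nonempty
      ({f : Fin n → S ×ₗ T // IsPPartition π f} ≃
        Σ p : {p : Equiv.Perm (Fin n) × Equiv.Perm (Fin n) // p.1 * p.2 = π},
          {f : Fin n → S // IsPPartition p.1.2 f} ×
            {f : Fin n → T // IsPPartition p.1.1 f}) :=
  ⟨lexPPartitionEquiv π⟩

/-- Gessel's fundamental bijection: for totally ordered countable sets `S`, `T`,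
with `S × T` ordered lexicographically,
`A(π; S×T) ↔ ∐_{στ = π} A(τ; S) × A(σ; T)`. -/
theorem ppartition_bijection (n : ℕ) (π : Equiv.Perm (Fin n))
    (S T : Type) [LinearOrder S] [LinearOrder T] [Countable S] [Countable T] :
    Nonempty
      ({f : Fin n → S ×ₗ T // IsPPartition π f} ≃
        Σ p : {p : Equiv.Perm (Fin n) × Equiv.Perm (Fin n) // p.1 * p.2 = π},
          {f : Fin n → S // IsPPartition p.1.2 f} ×
            {f : Fin n → T // IsPPartition p.1.1 f}) :=
  ppartition_bijection_general n π S T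
end

section
/- The structure constant a_{α,β}^γ, defined as the number of pairs (σ,τ) ∈ S_n × S_n with C(σ)=α, C(τ)=β, and στ = π for a fixed permutation π with C(π)=γ, depends only on γ and not on the choice of π. -/
def incRuns {α : Type*} [LinearOrder α] : List α → List ℕ
  | [] => []
  | [_] => [1]
  | a :: b :: l =>
    let r := incRuns (b :: l)
    if a < b then (r.headI + 1) :: r.tail else 1 :: r

/-- The descent composition of a permutation of `Fin n`. -/
def descComp {n : ℕ} (π : Equiv.Perm (Fin n)) : List ℕ :=
  incRuns (List.ofFn fun i => π i)

/-!
The descent composition and the descent set determine each other, so it suffices to show that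
the number of factorizations `σ * τ = π` with prescribed descent sets `(S, T)` depends only on
the descent set of `π`; by Möbius inversion on pairs of sets it is enough to count those with
`descents σ ⊆ S` and `descents τ ⊆ T`. These correspond bijectively to the rearrangements
`g = blockIndex S ∘ τ` of the block word of `S` that weakly increase at every position `i ∉ T`,
strictly when `i` is a descent of `π`: `τ` is recovered by sorting the positions by the key
`(g i, π i)`, and `σ = π * τ⁻¹` is then increasing on each block of `S`.
-/

open Finset

namespace Finset

lemma eq_of_forall_sum_Iic_eq {α M : Type*} [PartialOrder α] [LocallyFiniteOrderBot α]
    [WellFoundedLT α] [AddCancelCommMonoid M] {f g : α → M}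
    (h : ∀ a, ∑ b ∈ Iic a, f b = ∑ b ∈ Iic a, g b) : f = g := by
  funext a
  induction a using WellFoundedLT.induction with
  | _ a ih =>
    have hsum := h a
    rw [Iic_eq_cons_Iio, sum_cons, sum_cons, sum_congr rfl fun b hb => ih b (mem_Iio.1 hb)] at hsum
    exact add_right_cancel hsum

lemma card_filter_eq_of_card_fiber_eq {ι κ : Type*} [DecidableEq κ] {s t : Finset ι}
    (φ : ι → κ) {P : ι → Prop} [DecidablePred P] (hP : ∀ x y, φ x = φ y → P x → P y)
    (h : ∀ a, #{x ∈ s | φ x = a} = #{x ∈ t | φ x = a}) : #{x ∈ s | P x} = #{x ∈ t | P x} := by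
  classical
  let A := ((s ∪ t).filter P).image φ
  have hA : ∀ x ∈ s ∪ t, P x ↔ φ x ∈ A := fun x hx =>
    ⟨fun hPx => mem_image_of_mem φ (mem_filter.2 ⟨hx, hPx⟩), fun hφx => by
      obtain ⟨y, hy, hφ⟩ := mem_image.1 hφx
      exact hP y x hφ (mem_filter.1 hy).2⟩
  rw [filter_congr fun x hx => hA x (mem_union_left t hx),
    filter_congr fun x hx => hA x (mem_union_right s hx),
    ← sum_card_fiberwise_eq_card_filter, ← sum_card_fiberwise_eq_card_filter]
  exact sum_congr rfl fun a _ => h a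

end Finset

section Compositions

variable {α : Type*} [LinearOrder α]

def ascentPattern (l : List α) : List Bool :=
  List.zipWith (fun a b => decide (a < b)) l l.tail

def runsOf : List Bool → List ℕ
  | [] => [1]
  | true :: p => ((runsOf p).headI + 1) :: (runsOf p).tail
  | false :: p => 1 :: runsOf p

def patternOf : List ℕ → List Bool
  | [] => []
  | [k] => List.replicate (k - 1) true
  | k :: c :: r => List.replicate (k - 1) true ++ false :: patternOf (c :: r)

lemma runsOf_eq_succ_cons : ∀ p : List Bool, ∃ k t, runsOf p = (k + 1) :: t
  | [] => ⟨0, [], rfl⟩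
  | true :: p => by
    obtain ⟨k, t, h⟩ := runsOf_eq_succ_cons p
    exact ⟨k + 1, t, by simp [runsOf, h]⟩
  | false :: p => ⟨0, runsOf p, rfl⟩

lemma patternOf_succ_succ_cons (k : ℕ) (t : List ℕ) :
    patternOf ((k + 2) :: t) = true :: patternOf ((k + 1) :: t) := by
  cases t <;> simp [patternOf, List.replicate_succ]

lemma leftInverse_patternOf_runsOf : Function.LeftInverse patternOf runsOf := by
  intro p
  induction p with
  | nil => rfl
  | cons b p ih =>
    suffices patternOf (runsOf (b :: p)) = b :: patternOf (runsOf p) by rw [this, ih]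
    obtain ⟨k, t, h⟩ := runsOf_eq_succ_cons p
    cases b <;> simp [runsOf, h, patternOf, patternOf_succ_succ_cons]

lemma incRuns_eq_runsOf_ascentPattern :
    ∀ l : List α, l ≠ [] → incRuns l = runsOf (ascentPattern l)
  | [_], _ => rfl
  | a :: b :: l, _ => by
    rw [incRuns, incRuns_eq_runsOf_ascentPattern (b :: l) (List.cons_ne_nil b l)]
    by_cases h : a < b <;> simp [h, ascentPattern, runsOf]

lemma incRuns_eq_incRuns_iff {l l' : List α} (hl : l ≠ []) (hl' : l' ≠ []) :
    incRuns l = incRuns l' ↔ ascentPattern l = ascentPattern l' := by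
  rw [incRuns_eq_runsOf_ascentPattern l hl, incRuns_eq_runsOf_ascentPattern l' hl']
  exact leftInverse_patternOf_runsOf.injective.eq_iff

end Compositions

section Descents

variable {n : ℕ}

def descents (σ : Equiv.Perm (Fin n)) : Finset (Fin n) :=
  {i | ∃ j : Fin n, (j : ℕ) = i + 1 ∧ σ j < σ i}

lemma mem_descents_iff {σ : Equiv.Perm (Fin n)} {i j : Fin n} (hij : (j : ℕ) = i + 1) :
    i ∈ descents σ ↔ σ j < σ i := by
  simp only [descents, mem_filter, mem_univ, true_and]
  exact ⟨fun ⟨j', hj', h⟩ => Fin.ext (hj'.trans hij.symm) ▸ h, fun h => ⟨j, hij, h⟩⟩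

lemma notMem_descents_iff {σ : Equiv.Perm (Fin n)} {i j : Fin n} (hij : (j : ℕ) = i + 1) :
    i ∉ descents σ ↔ σ i < σ j := by
  have hne : σ i ≠ σ j := σ.injective.ne (Fin.ne_of_val_ne (by omega))
  rw [mem_descents_iff hij, not_lt, le_iff_lt_or_eq, or_iff_left hne]

lemma descents_eq_descents_iff {σ σ' : Equiv.Perm (Fin n)} :
    descents σ = descents σ' ↔
      ∀ i j : Fin n, (j : ℕ) = i + 1 → (σ i < σ j ↔ σ' i < σ' j) := by
  refine ⟨fun h i j hij => ?_, fun h => Finset.ext fun i => ?_⟩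
  · rw [← notMem_descents_iff hij, ← notMem_descents_iff hij, h]
  · by_cases hi : (i : ℕ) + 1 < n
    · rw [← not_iff_not, notMem_descents_iff (j := ⟨i + 1, hi⟩) rfl,
        notMem_descents_iff (j := ⟨i + 1, hi⟩) rfl]
      exact h i _ rfl
    · simp only [descents, mem_filter, mem_univ, true_and]
      exact iff_of_false (fun ⟨j, hj, _⟩ => hi (hj ▸ j.isLt))
        (fun ⟨j, hj, _⟩ => hi (hj ▸ j.isLt))

lemma ascentPattern_ofFn_eq_iff {σ σ' : Equiv.Perm (Fin n)} :
    ascentPattern (List.ofFn fun i => σ i) = ascentPattern (List.ofFn fun i => σ' i) ↔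
      ∀ i j : Fin n, (j : ℕ) = i + 1 → (σ i < σ j ↔ σ' i < σ' j) := by
  rw [List.ext_getElem_iff]
  simp only [ascentPattern, List.length_zipWith, List.length_tail, List.length_ofFn, true_and,
    List.getElem_zipWith, List.getElem_tail, List.getElem_ofFn, decide_eq_decide]
  refine ⟨fun h i j hij => ?_, fun h k hk _ => h _ _ rfl⟩
  obtain ⟨j, hj⟩ := j
  obtain rfl : j = i + 1 := hij
  exact h i (by omega) (by omega)

lemma descComp_eq_descComp_iff {σ σ' : Equiv.Perm (Fin n)} :
    descComp σ = descComp σ' ↔ descents σ = descents σ' := by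
  rcases n.eq_zero_or_pos with rfl | hn
  · simp [Subsingleton.elim σ σ']
  · rw [descComp, descComp, incRuns_eq_incRuns_iff (by simp; omega) (by simp; omega),
      ascentPattern_ofFn_eq_iff, descents_eq_descents_iff]

lemma apply_lt_apply_of_forall_notMem_descents {σ : Equiv.Perm (Fin n)} {p q : Fin n}
    (hpq : p < q) (h : ∀ r, p ≤ r → r < q → r ∉ descents σ) : σ p < σ q := by
  obtain ⟨k, hk⟩ : ∃ k, (q : ℕ) = p + k + 1 := ⟨q - p - 1, by omega⟩
  induction k generalizing q with
  | zero => exact (notMem_descents_iff hk).1 (h p le_rfl hpq)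
  | succ k ih =>
    let r : Fin n := ⟨p + k + 1, by omega⟩
    have hrq : r < q := Fin.lt_def.2 (by simp [r]; omega)
    calc σ p < σ r := ih (Fin.lt_def.2 (by simp [r]))
            (fun s hps hsr => h s hps (hsr.trans hrq)) rfl
      _ < σ q := (notMem_descents_iff (by simp [r]; omega)).1
            (h r (Fin.le_def.2 (by simp [r]; omega)) hrq)

end Descents

section Blocks

variable {n : ℕ}

-- `S` is read as a set of cut points: `p` lies in block number `blockIndex S p` when `Fin n` is
-- cut right after each element of `S`.
def blockIndex (S : Finset (Fin n)) (p : Fin n) : ℕ := #{s ∈ S | s < p}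

lemma blockIndex_mono (S : Finset (Fin n)) : Monotone (blockIndex S) :=
  fun _ _ hpq => card_le_card (monotone_filter_right S fun _ _ hs => hs.trans_le hpq)

lemma blockIndex_eq_blockIndex_iff {S : Finset (Fin n)} {p q : Fin n} (hpq : p ≤ q) :
    blockIndex S p = blockIndex S q ↔ ∀ r, p ≤ r → r < q → r ∉ S := by
  have hsub : {s ∈ S | s < p} ⊆ {s ∈ S | s < q} :=
    monotone_filter_right S fun _ _ hs => hs.trans_le hpq
  calc blockIndex S p = blockIndex S q ↔ {s ∈ S | s < p} = {s ∈ S | s < q} :=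
        ⟨fun h => eq_of_subset_of_card_le hsub h.ge, congrArg card⟩
    _ ↔ _ := by
      simp only [Finset.ext_iff, mem_filter]
      grind

lemma descents_subset_iff_strictMono {σ : Equiv.Perm (Fin n)} {S : Finset (Fin n)} :
    descents σ ⊆ S ↔ StrictMono fun p => toLex (blockIndex S p, σ p) := by
  refine ⟨fun hS p q hpq => Prod.Lex.lt_iff.2 ?_, fun hσ i hi => ?_⟩
  · rcases (blockIndex_mono S hpq.le).lt_or_eq with hlt | heq
    · exact Or.inl hlt
    · refine Or.inr ⟨heq, apply_lt_apply_of_forall_notMem_descents hpq fun r hpr hrq hr => ?_⟩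
      exact (blockIndex_eq_blockIndex_iff hpq.le).1 heq r hpr hrq (hS hr)
  · obtain ⟨j, hij, hji⟩ : ∃ j : Fin n, (j : ℕ) = i + 1 ∧ σ j < σ i := by
      simpa [descents] using hi
    have hij' : i < j := Fin.lt_def.2 (by omega)
    by_contra hiS
    have heq : blockIndex S i = blockIndex S j :=
      (blockIndex_eq_blockIndex_iff hij'.le).2 fun r hir hrj => by
        obtain rfl : r = i := le_antisymm (Fin.le_def.2 (by have := Fin.lt_def.1 hrj; omega)) hir
        exact hiS
    have := Prod.Lex.lt_iff.1 (hσ hij')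
    simp only [ofLex_toLex, heq, lt_irrefl, false_or, true_and] at this
    exact lt_asymm this hji

end Blocks

section Sorting

variable {n : ℕ} {α : Type*} [LinearOrder α]

lemma exists_perm_strictMono_comp_inv {K : Fin n → α} (hK : Function.Injective K) :
    ∃ τ : Equiv.Perm (Fin n), StrictMono (K ∘ ⇑τ⁻¹) :=
  ⟨(Tuple.sort K)⁻¹, by
    simpa using (Tuple.monotone_sort K).strictMono_of_injective
      (hK.comp (Tuple.sort K).injective)⟩

lemma perm_eq_of_monotone_comp_inv {K : Fin n → α} (hK : Function.Injective K)
    {τ₁ τ₂ : Equiv.Perm (Fin n)} (h₁ : Monotone (K ∘ ⇑τ₁⁻¹)) (h₂ : Monotone (K ∘ ⇑τ₂⁻¹)) :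
    τ₁ = τ₂ := by
  have hcomp := Tuple.unique_monotone h₁ h₂
  exact inv_injective (Equiv.ext fun p => hK (congrFun hcomp p))

lemma StrictMono.perm_lt_perm_iff {K : Fin n → α} {τ : Equiv.Perm (Fin n)}
    (hK : StrictMono (K ∘ ⇑τ⁻¹)) {i j : Fin n} : τ i < τ j ↔ K i < K j := by
  simpa using (hK.lt_iff_lt (a := τ i) (b := τ j)).symm

end Sorting

section Words

variable {n : ℕ}

def wordKey (g : Fin n → ℕ) (π : Equiv.Perm (Fin n)) (i : Fin n) : ℕ ×ₗ Fin n :=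
  toLex (g i, π i)

lemma wordKey_injective (g : Fin n → ℕ) (π : Equiv.Perm (Fin n)) :
    Function.Injective (wordKey g π) :=
  fun _ _ h => π.injective (congrArg (fun x => (ofLex x).2) h)

def IsCompatible (T D : Finset (Fin n)) (g : Fin n → ℕ) : Prop :=
  ∀ i j : Fin n, (j : ℕ) = i + 1 → i ∉ T → g i < g j ∨ g i = g j ∧ i ∉ D

instance (T D : Finset (Fin n)) : DecidablePred (IsCompatible T D) :=
  fun _ => by unfold IsCompatible; infer_instance

def compatibleWords (S T D : Finset (Fin n)) : Finset (Fin n → ℕ) :=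
  {g ∈ univ.image fun τ : Equiv.Perm (Fin n) => blockIndex S ∘ τ | IsCompatible T D g}

lemma descents_subset_iff_forall_lt {τ : Equiv.Perm (Fin n)} {T : Finset (Fin n)} :
    descents τ ⊆ T ↔ ∀ i j : Fin n, (j : ℕ) = i + 1 → i ∉ T → τ i < τ j := by
  refine ⟨fun h i j hij hiT => (notMem_descents_iff hij).1 fun hi => hiT (h hi), fun h i hi => ?_⟩
  by_contra hiT
  obtain ⟨j, hij, hji⟩ : ∃ j : Fin n, (j : ℕ) = i + 1 ∧ τ j < τ i := by simpa [descents] using hi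
  exact lt_asymm (h i j hij hiT) hji

lemma descents_subset_iff_isCompatible {g : Fin n → ℕ} {π τ : Equiv.Perm (Fin n)}
    {T : Finset (Fin n)} (hK : StrictMono (wordKey g π ∘ ⇑τ⁻¹)) :
    descents τ ⊆ T ↔ IsCompatible T (descents π) g := by
  rw [descents_subset_iff_forall_lt]
  refine forall₄_congr fun i j hij _ => ?_
  rw [hK.perm_lt_perm_iff, wordKey, wordKey, Prod.Lex.lt_iff, notMem_descents_iff hij]
  rfl

lemma descents_subset_iff_strictMono_wordKey {σ τ : Equiv.Perm (Fin n)} {S : Finset (Fin n)} :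
    descents σ ⊆ S ↔ StrictMono (wordKey (blockIndex S ∘ τ) (σ * τ) ∘ ⇑τ⁻¹) := by
  rw [descents_subset_iff_strictMono]
  congr!
  simp [wordKey]

end Words

section Factorizations

variable {n : ℕ}

def factorizations (π : Equiv.Perm (Fin n)) : Finset (Equiv.Perm (Fin n) × Equiv.Perm (Fin n)) :=
  {p | p.1 * p.2 = π}

def descentPair (p : Equiv.Perm (Fin n) × Equiv.Perm (Fin n)) : Finset (Fin n) × Finset (Fin n) :=
  (descents p.1, descents p.2)

lemma blockIndex_comp_eq_of_strictMono_wordKey {S : Finset (Fin n)} {π τ τ₀ : Equiv.Perm (Fin n)}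
    (hτ : StrictMono (wordKey (blockIndex S ∘ τ₀) π ∘ ⇑τ⁻¹)) :
    blockIndex S ∘ τ₀ = blockIndex S ∘ τ := by
  have hmono : Monotone ((blockIndex S ∘ τ₀) ∘ ⇑τ⁻¹) :=
    fun _ _ hpq => Prod.Lex.monotone_fst _ _ (hτ.monotone hpq)
  have hmono₀ : Monotone ((blockIndex S ∘ τ₀) ∘ ⇑τ₀⁻¹) := by
    simpa [Function.comp_def] using blockIndex_mono S
  have hcomp := Tuple.unique_monotone hmono hmono₀
  funext i
  simpa using congrFun hcomp (τ i)

theorem card_factorizations_descentPair_le (S T : Finset (Fin n)) (π : Equiv.Perm (Fin n)) :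
    #{p ∈ factorizations π | descentPair p ≤ (S, T)} = #(compatibleWords S T (descents π)) := by
  simp only [factorizations, descentPair, filter_filter, Prod.mk_le_mk]
  refine card_bij (fun p _ => blockIndex S ∘ p.2) ?_ ?_ ?_
  · rintro ⟨σ, τ⟩ hp
    obtain ⟨hπ, hσ, hτ⟩ := (mem_filter.1 hp).2
    rw [descents_subset_iff_strictMono_wordKey, hπ] at hσ
    exact mem_filter.2 ⟨mem_image_of_mem _ (mem_univ τ), (descents_subset_iff_isCompatible hσ).1 hτ⟩
  · rintro ⟨σ₁, τ₁⟩ hp₁ ⟨σ₂, τ₂⟩ hp₂ hg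
    obtain ⟨h₁, hσ₁, -⟩ := (mem_filter.1 hp₁).2
    obtain ⟨h₂, hσ₂, -⟩ := (mem_filter.1 hp₂).2
    dsimp only at hg h₁ h₂ hσ₁ hσ₂
    rw [descents_subset_iff_strictMono_wordKey, h₁] at hσ₁
    rw [descents_subset_iff_strictMono_wordKey, h₂, ← hg] at hσ₂
    obtain rfl : τ₁ = τ₂ :=
      perm_eq_of_monotone_comp_inv (wordKey_injective _ π) hσ₁.monotone hσ₂.monotone
    rw [← h₂] at h₁
    rw [mul_right_cancel h₁]
  · intro g hg
    obtain ⟨hg, hcompat⟩ := mem_filter.1 hg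
    obtain ⟨τ₀, -, rfl⟩ := mem_image.1 hg
    obtain ⟨τ, hτ⟩ := exists_perm_strictMono_comp_inv (wordKey_injective (blockIndex S ∘ τ₀) π)
    have hblock := blockIndex_comp_eq_of_strictMono_wordKey hτ
    refine ⟨(π * τ⁻¹, τ), mem_filter.2 ⟨mem_univ _, by simp, ?_, ?_⟩, hblock.symm⟩
    · rwa [descents_subset_iff_strictMono_wordKey, inv_mul_cancel_right, ← hblock]
    · exact (descents_subset_iff_isCompatible hτ).2 hcompat

end Factorizations

theorem card_factorizations_descentPair_eq {n : ℕ} {π π' : Equiv.Perm (Fin n)}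
    (hD : descents π = descents π') (a : Finset (Fin n) × Finset (Fin n)) :
    #{p ∈ factorizations π | descentPair p = a} = #{p ∈ factorizations π' | descentPair p = a} := by
  refine congrFun (eq_of_forall_sum_Iic_eq
    (f := fun a => #{p ∈ factorizations π | descentPair p = a})
    (g := fun a => #{p ∈ factorizations π' | descentPair p = a}) fun ⟨S, T⟩ => ?_) a
  simp only [sum_card_fiberwise_eq_card_filter, mem_Iic, card_factorizations_descentPair_le, hD]

/-- The number of pairs `(σ,τ)` with `C(σ) = α`, `C(τ) = β` and `στ = π`
depends only on the descent composition of `π`, not on `π` itself. -/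
theorem structure_constant_well_defined (n : ℕ) (α β γ : List ℕ)
    (π π' : Equiv.Perm (Fin n)) (hπ : descComp π = γ) (hπ' : descComp π' = γ) :
    (Finset.univ.filter (fun p : Equiv.Perm (Fin n) × Equiv.Perm (Fin n) =>
        descComp p.1 = α ∧ descComp p.2 = β ∧ p.1 * p.2 = π)).card =
    (Finset.univ.filter (fun p : Equiv.Perm (Fin n) × Equiv.Perm (Fin n) =>
        descComp p.1 = α ∧ descComp p.2 = β ∧ p.1 * p.2 = π')).card := by
  have hD : descents π = descents π' := descComp_eq_descComp_iff.1 (hπ.trans hπ'.symm)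
  have hfilter : ∀ ρ : Equiv.Perm (Fin n),
      univ.filter (fun p : Equiv.Perm (Fin n) × Equiv.Perm (Fin n) =>
        descComp p.1 = α ∧ descComp p.2 = β ∧ p.1 * p.2 = ρ) =
      {p ∈ factorizations ρ | descComp p.1 = α ∧ descComp p.2 = β} := fun ρ => by
    ext p
    simp only [factorizations, mem_filter, mem_univ, true_and]
    tauto
  rw [hfilter, hfilter]
  refine card_filter_eq_of_card_fiber_eq descentPair (fun p q hpq hp => ?_)
    (card_factorizations_descentPair_eq hD)
  simp only [descentPair, Prod.mk.injEq, ← descComp_eq_descComp_iff] at hpq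
  rwa [← hpq.1, ← hpq.2]
end
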